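/- Let f be a smooth real-valued function on an open interval I ⊆ ℝ with f'' nowhere vanishing. On the open set Ω = {(x,y,z,p,r) ∈ ℝ⁵ : p ∈ I}, define H(x,y,z,p,r) = −r² f'''(p)/f''(p). Then the Wünschmann expression of H satisfies, at every point of Ω: 9 D²H_r − 27 D H_p − 18 H_r · D H_r + 18 H_p H_r + 4 H_r³ + 54 H_z = (r³ / f''(p)³) · (40 f'''(p)³ − 45 f''(p) f'''(p) f''''(p) + 9 f''(p)² f'''''(p)); that is, the Wünschmann invariant of H equals r³/f''³ times the Monge expression of f. -/

import Mathlib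

/-- Partial derivative of a function on `ℝ⁵` (coordinates `(x,y,z,p,r)` indexed `0,…,4`)
in the `i`-th coordinate direction. -/
noncomputable def pd (i : Fin 5) (F : (Fin 5 → ℝ) → ℝ) (v : Fin 5 → ℝ) : ℝ :=
  fderiv ℝ F v (Pi.single i 1)

/-- The total derivative operator `D F = F_x + p F_z + r F_p + H F_r`. -/
noncomputable def Dop (H : (Fin 5 → ℝ) → ℝ) (F : (Fin 5 → ℝ) → ℝ) (v : Fin 5 → ℝ) : ℝ :=
  pd 0 F v + v 3 * pd 2 F v + v 4 * pd 3 F v + H v * pd 4 F v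

/-- The operator `Δ F = F_y + G F_z + (DG) F_p + (D²G) F_r`. -/
noncomputable def Delta (G H : (Fin 5 → ℝ) → ℝ) (F : (Fin 5 → ℝ) → ℝ) (v : Fin 5 → ℝ) : ℝ :=
  pd 1 F v + G v * pd 2 F v + Dop H G v * pd 3 F v + Dop H (Dop H G) v * pd 4 F v

/-- The Wünschmann expression
`W(H) = 9 D²H_r − 27 D H_p − 18 H_r D H_r + 18 H_p H_r + 4 H_r³ + 54 H_z`. -/
noncomputable def wunschmann (H : (Fin 5 → ℝ) → ℝ) (v : Fin 5 → ℝ) : ℝ :=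
  9 * Dop H (Dop H (pd 4 H)) v - 27 * Dop H (pd 3 H) v
    - 18 * pd 4 H v * Dop H (pd 4 H) v + 18 * pd 3 H v * pd 4 H v
    + 4 * (pd 4 H v) ^ 3 + 54 * pd 2 H v

/-- The Monge expression `M(f) = 40 f'''³ − 45 f'' f''' f'''' + 9 f''² f'''''`. -/
noncomputable def monge (f : ℝ → ℝ) (p : ℝ) : ℝ :=
  40 * (iteratedDeriv 3 f p) ^ 3
    - 45 * iteratedDeriv 2 f p * iteratedDeriv 3 f p * iteratedDeriv 4 f p
    + 9 * (iteratedDeriv 2 f p) ^ 2 * iteratedDeriv 5 f p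

/-!
On functions of the form `rⁿ φ(p)` the total derivative of `H = r² a(p)` acts by
`D (rⁿ φ) = rⁿ⁺¹ (φ' + n a φ)`, and `H_r`, `H_p`, `H_z` are of this form again. So every term of
`W(H)` is `r³` times a differential polynomial in `a`, and collecting them gives
`W(r² a) = -r³ (9 a'' + 18 a a' + 4 a³)`. For `a = -f'''/f''` this is `r³ M(f) / f''³`.
-/
open ContinuousLinearMap Set

theorem eqOn_pd_of_eqOn {U : Set (Fin 5 → ℝ)} (hU : IsOpen U) {F G : (Fin 5 → ℝ) → ℝ}
    (h : EqOn F G U) (i : Fin 5) : EqOn (pd i F) (pd i G) U := fun v hv => by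
  unfold pd
  rw [(Filter.eventuallyEq_of_mem (hU.mem_nhds hv) h).fderiv_eq]

theorem eqOn_dop_of_eqOn {U : Set (Fin 5 → ℝ)} (hU : IsOpen U) {F G : (Fin 5 → ℝ) → ℝ}
    (h : EqOn F G U) (H : (Fin 5 → ℝ) → ℝ) : EqOn (Dop H F) (Dop H G) U := fun v hv => by
  simp only [Dop, eqOn_pd_of_eqOn hU h _ hv]

noncomputable def rPowMul (n : ℕ) (φ : ℝ → ℝ) (w : Fin 5 → ℝ) : ℝ :=
  w 4 ^ n * φ (w 3)

theorem hasFDerivAt_rPowMul {φ : ℝ → ℝ} {φ' : ℝ} {v : Fin 5 → ℝ} (hφ : HasDerivAt φ φ' (v 3))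
    (n : ℕ) : HasFDerivAt (rPowMul n φ)
      ((v 4 ^ n * φ') • (proj 3 : (Fin 5 → ℝ) →L[ℝ] ℝ)
        + (n * v 4 ^ (n - 1) * φ (v 3)) • (proj 4 : (Fin 5 → ℝ) →L[ℝ] ℝ)) v := by
  have h4 := ((proj 4 : (Fin 5 → ℝ) →L[ℝ] ℝ).hasFDerivAt (x := v)).pow n
  have h3 := hφ.comp_hasFDerivAt v (proj 3 : (Fin 5 → ℝ) →L[ℝ] ℝ).hasFDerivAt
  refine (h4.mul h3).congr_fderiv ?_
  ext u
  simp only [add_apply, smul_apply, proj_apply, Function.comp_apply, nsmul_eq_mul, smul_eq_mul]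
  ring

theorem pd_rPowMul {φ : ℝ → ℝ} {φ' : ℝ} {v : Fin 5 → ℝ} (hφ : HasDerivAt φ φ' (v 3))
    (n : ℕ) (i : Fin 5) : pd i (rPowMul n φ) v =
      v 4 ^ n * φ' * (Pi.single i 1 : Fin 5 → ℝ) 3
        + n * v 4 ^ (n - 1) * φ (v 3) * (Pi.single i 1 : Fin 5 → ℝ) 4 := by
  simp [pd, (hasFDerivAt_rPowMul hφ n).fderiv]

theorem dop_rPowMul {a φ : ℝ → ℝ} {φ' : ℝ} {v : Fin 5 → ℝ} (hφ : HasDerivAt φ φ' (v 3))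
    (n : ℕ) : Dop (rPowMul 2 a) (rPowMul n φ) v =
      v 4 ^ (n + 1) * (φ' + n * a (v 3) * φ (v 3)) := by
  simp only [Dop, pd_rPowMul hφ, rPowMul]
  rcases n with _ | n
  · simp
  · simp only [Pi.single_eq_same, ne_eq, Fin.reduceEq, not_false_eq_true, Pi.single_eq_of_ne,
      Nat.cast_add, Nat.cast_one, add_tsub_cancel_right, mul_zero, add_zero, zero_add, mul_one]
    ring

theorem wunschmann_rPowMul_two {I : Set ℝ} (hI : IsOpen I) {a a' a'' : ℝ → ℝ}
    (ha : ∀ q ∈ I, HasDerivAt a (a' q) q) (ha' : ∀ q ∈ I, HasDerivAt a' (a'' q) q)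
    {v : Fin 5 → ℝ} (hv : v 3 ∈ I) :
    wunschmann (rPowMul 2 a) v =
      -v 4 ^ 3 * (9 * a'' (v 3) + 18 * a (v 3) * a' (v 3) + 4 * a (v 3) ^ 3) := by
  set Ω := {w : Fin 5 → ℝ | w 3 ∈ I}
  have hΩ : IsOpen Ω := hI.preimage (continuous_apply 3)
  set H := rPowMul 2 a
  -- These hold only where `a` is differentiable, i.e. on the open set `Ω`, which suffices for `D`.
  have hHr : EqOn (pd 4 H) (rPowMul 1 fun p => 2 * a p) Ω := fun w hw => by
    simp only [H, rPowMul, pd_rPowMul (ha _ hw), Pi.single_eq_same, ne_eq, Fin.reduceEq,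
      not_false_eq_true, Pi.single_eq_of_ne, Nat.cast_ofNat, pow_one, mul_zero, mul_one, zero_add]
    ring
  have hHp : EqOn (pd 3 H) (rPowMul 2 a') Ω := fun w hw => by
    simp [H, pd_rPowMul (ha _ hw), rPowMul]
  have hDHr : EqOn (Dop H (pd 4 H)) (rPowMul 2 fun p => 2 * a' p + 2 * a p ^ 2) Ω :=
    fun w hw => by
      rw [eqOn_dop_of_eqOn hΩ hHr H hw, dop_rPowMul ((ha _ hw).const_mul 2)]
      simp only [rPowMul]
      push_cast
      ring
  have hc : HasDerivAt (fun p => 2 * a' p + 2 * a p ^ 2)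
      (2 * a'' (v 3) + 2 * (2 * a (v 3) * a' (v 3))) (v 3) :=
    (((ha' _ hv).const_mul 2).add (((ha _ hv).pow 2).const_mul 2)).congr_deriv (by ring)
  have hHz : pd 2 H v = 0 := by simp [H, pd_rPowMul (ha _ hv)]
  rw [wunschmann, eqOn_dop_of_eqOn hΩ hDHr H hv, dop_rPowMul hc, hDHr hv,
    eqOn_dop_of_eqOn hΩ hHp H hv, dop_rPowMul (ha' _ hv), hHr hv, hHp hv, hHz]
  simp only [rPowMul]
  push_cast
  ring

theorem wunschmann_rPowMul_neg_div {I : Set ℝ} (hI : IsOpen I) {g : ℕ → ℝ → ℝ}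
    (hg : ∀ k, ∀ q ∈ I, HasDerivAt (g k) (g (k + 1) q) q) (hg₀ : ∀ q ∈ I, g 0 q ≠ 0)
    {v : Fin 5 → ℝ} (hv : v 3 ∈ I) :
    wunschmann (rPowMul 2 fun p => -(g 1 p / g 0 p)) v =
      v 4 ^ 3 / g 0 (v 3) ^ 3 * (40 * g 1 (v 3) ^ 3
        - 45 * g 0 (v 3) * g 1 (v 3) * g 2 (v 3) + 9 * g 0 (v 3) ^ 2 * g 3 (v 3)) := by
  have ha : ∀ q ∈ I, HasDerivAt (fun p => -(g 1 p / g 0 p))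
      (-((g 2 q * g 0 q - g 1 q * g 1 q) / g 0 q ^ 2)) q := fun q hq =>
    ((hg 1 q hq).div (hg 0 q hq) (hg₀ q hq)).neg
  have ha' : ∀ q ∈ I, HasDerivAt (fun p => -((g 2 p * g 0 p - g 1 p * g 1 p) / g 0 p ^ 2))
      (-((g 3 q * g 0 q ^ 2 - 3 * g 0 q * g 1 q * g 2 q + 2 * g 1 q ^ 3) / g 0 q ^ 3)) q := by
    intro q hq
    refine ((((hg 2 q hq).mul (hg 0 q hq)).sub ((hg 1 q hq).mul (hg 1 q hq))).div
      ((hg 0 q hq).pow 2) (pow_ne_zero 2 (hg₀ q hq))).neg.congr_deriv ?_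
    simp only [Pi.pow_apply, Pi.mul_apply, Pi.sub_apply]
    field_simp [hg₀ q hq]
    ring
  rw [wunschmann_rPowMul_two hI ha ha' hv]
  field_simp [hg₀ _ hv]
  ring

theorem contDiffOn_iteratedDeriv {I : Set ℝ} (hI : IsOpen I) {f : ℝ → ℝ}
    (hf : ContDiffOn ℝ (⊤ : ℕ∞) f I) (k : ℕ) : ContDiffOn ℝ (⊤ : ℕ∞) (iteratedDeriv k f) I := by
  induction k with
  | zero => simpa using hf
  | succ k ih =>
    rw [iteratedDeriv_succ]
    exact ih.deriv_of_isOpen hI (by simp)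

theorem hasDerivAt_iteratedDeriv {I : Set ℝ} (hI : IsOpen I) {f : ℝ → ℝ}
    (hf : ContDiffOn ℝ (⊤ : ℕ∞) f I) {q : ℝ} (hq : q ∈ I) (k : ℕ) :
    HasDerivAt (iteratedDeriv k f) (iteratedDeriv (k + 1) f q) q := by
  rw [iteratedDeriv_succ]
  exact ((contDiffOn_iteratedDeriv hI hf k).differentiableOn (by simp) q hq
    |>.differentiableAt (hI.mem_nhds hq)).hasDerivAt

theorem wunschmann_eq_monge_example_general
    (I : Set ℝ) (hI : IsOpen I)
    (f : ℝ → ℝ) (hf : ContDiffOn ℝ (⊤ : ℕ∞) f I)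
    (hnd : ∀ p ∈ I, iteratedDeriv 2 f p ≠ 0) :
    ∀ v : Fin 5 → ℝ, v 3 ∈ I →
      wunschmann
        (fun v => -(v 4) ^ 2 * iteratedDeriv 3 f (v 3) / iteratedDeriv 2 f (v 3)) v =
      (v 4) ^ 3 / (iteratedDeriv 2 f (v 3)) ^ 3 * monge f (v 3) := by
  intro v hv
  have hH : (fun v : Fin 5 → ℝ => -(v 4) ^ 2 * iteratedDeriv 3 f (v 3) / iteratedDeriv 2 f (v 3))
      = rPowMul 2 fun p => -(iteratedDeriv 3 f p / iteratedDeriv 2 f p) := by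
    funext w
    simp only [rPowMul]
    ring
  rw [hH, wunschmann_rPowMul_neg_div hI (g := fun k => iteratedDeriv (k + 2) f)
    (fun k _ hq => hasDerivAt_iteratedDeriv hI hf hq (k + 2)) hnd hv]
  rfl

/-- For `H = −r² f'''(p)/f''(p)` (with `f''` nonvanishing), the Wünschmann
expression of `H` equals `r³/f''(p)³` times the Monge expression of `f`, at every point of
`Ω = {(x,y,z,p,r) : p ∈ I}`. -/
theorem wunschmann_eq_monge_example
    (I : Set ℝ) (hI : IsOpen I) (hI' : Convex ℝ I)
    (f : ℝ → ℝ) (hf : ContDiffOn ℝ (⊤ : ℕ∞) f I)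
    (hnd : ∀ p ∈ I, iteratedDeriv 2 f p ≠ 0) :
    ∀ v : Fin 5 → ℝ, v 3 ∈ I →
      wunschmann
        (fun v => -(v 4) ^ 2 * iteratedDeriv 3 f (v 3) / iteratedDeriv 2 f (v 3)) v =
      (v 4) ^ 3 / (iteratedDeriv 2 f (v 3)) ^ 3 * monge f (v 3) :=
  wunschmann_eq_monge_example_general I hI f hf hnd
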